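/- arXiv:2510.26361 — 3 statements merged into one kernel-verified Lean document; each statement's English description precedes it below -/
import Mathlib

section
/- Let V be a 4-dimensional complex vector space and let ω be a nonzero element of the degree-2 component of the exterior algebra ⋀V (i.e., ω lies in the square of the image of V in ⋀V). Then ω is decomposable — there exist u, v ∈ V with ω = u ∧ v — if and only if ω ∧ ω = 0. (This is the identification of the image of the Plücker embedding of the Grassmannian of 2-planes in ℂ⁴ with a quadric in ℙ⁵.) -/
/-!
Write `ω = ∑ᵢⱼ Aᵢⱼ eᵢ ∧ eⱼ` in a basis and let `a = A - Aᵀ`. Then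
`ω ∧ ω = 2 Pf(a) e₀ ∧ e₁ ∧ e₂ ∧ e₃`, so `ω ∧ ω = 0` is the Plücker relation
`a₀₁a₂₃ - a₀₂a₁₃ + a₀₃a₁₂ = 0`. After relabelling the basis so that `a₀₁ ≠ 0`, this relation
is exactly what makes `ω = (a₀₁e₀ - a₁₂e₂ - a₁₃e₃) ∧ (e₁ + (a₀₂/a₀₁)e₂ + (a₀₃/a₀₁)e₃)`.
-/

open scoped Matrix

theorem Equiv.Perm.exists_apply_eq_and_apply_eq {α : Type*} [DecidableEq α] {a b i j : α}
    (hab : a ≠ b) (hij : i ≠ j) : ∃ σ : Equiv.Perm α, σ a = i ∧ σ b = j := by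
  have hj : Equiv.swap a i j ≠ a := by
    rw [Ne, Equiv.swap_apply_eq_iff, Equiv.swap_apply_left]; exact hij.symm
  refine ⟨Equiv.swap a i * Equiv.swap b (Equiv.swap a i j), ?_, ?_⟩
  · rw [Equiv.Perm.mul_apply, Equiv.swap_apply_of_ne_of_ne hab hj.symm, Equiv.swap_apply_left]
  · rw [Equiv.Perm.mul_apply, Equiv.swap_apply_left, Equiv.swap_apply_self]

def Matrix.pfaffianFin4 {R : Type*} [CommRing R] (A : Matrix (Fin 4) (Fin 4) R) : R :=
  A 0 1 * A 2 3 - A 0 2 * A 1 3 + A 0 3 * A 1 2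

namespace ExteriorAlgebra

section CommRing

variable {R M : Type*} [CommRing R] [AddCommGroup M] [Module R M]

theorem ι_mul_ι_comm (x y : M) : ι R x * ι R y = -(ι R y * ι R x) :=
  eq_neg_of_add_eq_zero_left (ι_add_mul_swap x y)

theorem ι_mul_ι_mul_left_comm (x y : M) (z : ExteriorAlgebra R M) :
    ι R x * (ι R y * z) = -(ι R y * (ι R x * z)) := by
  rw [← mul_assoc, ι_mul_ι_comm, neg_mul, mul_assoc]

theorem ι_mul_ι_self_mul (x : M) (z : ExteriorAlgebra R M) : ι R x * (ι R x * z) = 0 := by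
  rw [← mul_assoc, ι_sq_zero, zero_mul]

theorem ι_mul_ι_mul_self (x y : M) : ι R x * ι R y * (ι R x * ι R y) = 0 := by
  rw [mul_assoc, ι_mul_ι_mul_left_comm y x, mul_neg, ι_mul_ι_self_mul, neg_zero]

def bivector {n : Type*} [Fintype n] (A : Matrix n n R) (v : n → M) : ExteriorAlgebra R M :=
  ∑ i, ∑ j, A i j • (ι R (v i) * ι R (v j))

theorem bivector_submatrix {m n : Type*} [Fintype m] [Fintype n] (A : Matrix n n R) (v : n → M)
    (σ : m ≃ n) : bivector (A.submatrix σ σ) (v ∘ σ) = bivector A v := by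
  simp only [bivector, Matrix.submatrix_apply, Function.comp_apply]
  rw [← σ.sum_comp]
  exact Fintype.sum_congr _ _ fun i => σ.sum_comp (fun j => A (σ i) j • (ι R (v (σ i)) * ι R (v j)))

theorem exists_bivector_eq_of_mem_range_ι_sq {n : Type*} [Fintype n] (b : Module.Basis n R M)
    {ω : ExteriorAlgebra R M} (hω : ω ∈ LinearMap.range (ι R : M →ₗ[R] _) ^ 2) :
    ∃ A : Matrix n n R, bivector A b = ω := by
  have hrange : LinearMap.range (ι R : M →ₗ[R] _) = Submodule.span R (Set.range (ι R ∘ b)) := by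
    rw [LinearMap.range_eq_map, ← b.span_eq, Submodule.map_span, ← Set.range_comp]
  have hspan : LinearMap.range (ι R : M →ₗ[R] _) ^ 2 ≤
      Submodule.span R (Set.range fun p : n × n => ι R (b p.1) * ι R (b p.2)) := by
    rw [pow_two, hrange, Submodule.span_mul_span, Submodule.span_le]
    rintro _ ⟨_, ⟨i, rfl⟩, _, ⟨j, rfl⟩, rfl⟩
    exact Submodule.subset_span ⟨(i, j), rfl⟩
  obtain ⟨c, hc⟩ := (Submodule.mem_span_range_iff_exists_fun R).mp (hspan hω)
  exact ⟨Matrix.of fun i j => c (i, j), by rw [← hc, Fintype.sum_prod_type]; rfl⟩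

theorem ιMulti_fin_four (v : Fin 4 → M) :
    ιMulti R 4 v = ι R (v 0) * (ι R (v 1) * (ι R (v 2) * ι R (v 3))) := by
  simp [ιMulti_apply, Matrix.vecTail]

theorem bivector_fin_four (A : Matrix (Fin 4) (Fin 4) R) (v : Fin 4 → M) :
    bivector A v =
      (A 0 1 - A 1 0) • (ι R (v 0) * ι R (v 1)) + (A 0 2 - A 2 0) • (ι R (v 0) * ι R (v 2))
      + (A 0 3 - A 3 0) • (ι R (v 0) * ι R (v 3)) + (A 1 2 - A 2 1) • (ι R (v 1) * ι R (v 2))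
      + (A 1 3 - A 3 1) • (ι R (v 1) * ι R (v 3)) + (A 2 3 - A 3 2) • (ι R (v 2) * ι R (v 3)) := by
  simp only [bivector, Fin.sum_univ_four, ι_sq_zero, smul_zero, ι_mul_ι_comm (v 1) (v 0),
    ι_mul_ι_comm (v 2) (v 0), ι_mul_ι_comm (v 3) (v 0), ι_mul_ι_comm (v 2) (v 1),
    ι_mul_ι_comm (v 3) (v 1), ι_mul_ι_comm (v 3) (v 2)]
  module

theorem bivector_mul_self_fin_four (A : Matrix (Fin 4) (Fin 4) R) (v : Fin 4 → M) :
    bivector A v * bivector A v = (2 * (A - Aᵀ).pfaffianFin4) • ιMulti R 4 v := by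
  rw [bivector_fin_four, ιMulti_fin_four]
  simp only [mul_add, add_mul, smul_mul_assoc, mul_smul_comm, smul_smul, mul_assoc,
    ι_sq_zero, ι_mul_ι_self_mul, ι_mul_ι_comm (v 2) (v 1), ι_mul_ι_comm (v 3) (v 1),
    ι_mul_ι_comm (v 3) (v 2), ι_mul_ι_mul_left_comm (v 1) (v 0), ι_mul_ι_mul_left_comm (v 2) (v 0),
    ι_mul_ι_mul_left_comm (v 3) (v 0), ι_mul_ι_mul_left_comm (v 2) (v 1),
    ι_mul_ι_mul_left_comm (v 3) (v 1), ι_mul_ι_mul_left_comm (v 3) (v 2),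
    mul_neg, mul_zero, smul_zero, smul_neg, neg_neg, add_zero, zero_add, neg_zero]
  simp only [Matrix.pfaffianFin4, Matrix.sub_apply, Matrix.transpose_apply]
  module

end CommRing

section Field

variable {K E : Type*} [Field K] [AddCommGroup E] [Module K E]

theorem ιMulti_ne_zero_of_linearIndependent {n : ℕ} {v : Fin n → E} (hv : LinearIndependent K v) :
    ιMulti K n v ≠ 0 := by
  have := (exteriorPower.ιMulti_family_linearIndependent_field (n := n) hv).ne_zero
    ⟨Finset.univ, by simp⟩
  contrapose! this
  ext1
  have hid : Finset.univ.orderEmbOfFin (Finset.card_fin n) =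
      OrderEmbedding.ofStrictMono id strictMono_id :=
    (Finset.orderEmbOfFin_unique' _ fun _ => Finset.mem_univ _).symm
  simpa [ExteriorAlgebra.ιMulti_family, Set.powersetCard.ofFinEmbEquiv, hid] using this

theorem exists_bivector_eq_ι_mul_ι_of_pfaffianFin4_eq_zero (A : Matrix (Fin 4) (Fin 4) K)
    (v : Fin 4 → E) (h01 : A 0 1 ≠ A 1 0) (hA : (A - Aᵀ).pfaffianFin4 = 0) :
    ∃ x y : E, bivector A v = ι K x * ι K y := by
  have ha : A 0 1 - A 1 0 ≠ 0 := sub_ne_zero.2 h01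
  refine ⟨(A 0 1 - A 1 0) • v 0 - (A 1 2 - A 2 1) • v 2 - (A 1 3 - A 3 1) • v 3,
    v 1 + ((A 0 2 - A 2 0) / (A 0 1 - A 1 0)) • v 2 + ((A 0 3 - A 3 0) / (A 0 1 - A 1 0)) • v 3, ?_⟩
  rw [bivector_fin_four]
  simp only [map_add, map_sub, map_smul, sub_mul, mul_add, smul_mul_assoc, mul_smul_comm,
    ι_sq_zero, smul_zero, ι_mul_ι_comm (v 2) (v 1),
    ι_mul_ι_comm (v 3) (v 1), ι_mul_ι_comm (v 3) (v 2), smul_neg]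
  simp only [Matrix.pfaffianFin4, Matrix.sub_apply, Matrix.transpose_apply] at hA
  match_scalars <;> field_simp
  linear_combination hA

theorem exists_eq_ι_mul_ι_of_bivector_mul_self_eq_zero [NeZero (2 : K)] {v : Fin 4 → E}
    (hv : LinearIndependent K v) (A : Matrix (Fin 4) (Fin 4) K)
    (h : bivector A v * bivector A v = 0) : ∃ x y : E, bivector A v = ι K x * ι K y := by
  by_cases hA : ∀ i j, A i j = A j i
  · exact ⟨0, 0, by simp [bivector_fin_four, hA]⟩
  obtain ⟨i, j, hij⟩ : ∃ i j, A i j ≠ A j i := by simpa using hA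
  obtain ⟨σ, rfl, rfl⟩ := Equiv.Perm.exists_apply_eq_and_apply_eq (zero_ne_one' (Fin 4))
    (show i ≠ j by rintro rfl; exact hij rfl)
  -- relabel the vectors so that the nonzero coefficient sits at `(0, 1)`
  rw [← bivector_submatrix A v σ] at h ⊢
  refine exists_bivector_eq_ι_mul_ι_of_pfaffianFin4_eq_zero _ _ hij ?_
  rw [bivector_mul_self_fin_four, smul_eq_zero, mul_eq_zero] at h
  exact (h.resolve_right (ιMulti_ne_zero_of_linearIndependent (hv.comp σ σ.injective))).resolve_left
    two_ne_zero

end Field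

end ExteriorAlgebra

open ExteriorAlgebra

theorem decomposable_iff_wedge_square_zero_general
    {V : Type*} [AddCommGroup V] [Module ℂ V] (hV : Module.finrank ℂ V = 4)
    (ω : ExteriorAlgebra ℂ V)
    (hω2 : ω ∈ (LinearMap.range (ExteriorAlgebra.ι ℂ : V →ₗ[ℂ] ExteriorAlgebra ℂ V)) ^ 2) :
    (∃ u v : V, ω = ExteriorAlgebra.ι ℂ u * ExteriorAlgebra.ι ℂ v) ↔ ω * ω = 0 := by
  refine ⟨fun ⟨u, v, hω⟩ => hω ▸ ι_mul_ι_mul_self u v, fun hsq => ?_⟩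
  have : Module.Finite ℂ V := Module.finite_of_finrank_eq_succ hV
  let b := Module.finBasisOfFinrankEq ℂ V hV
  obtain ⟨A, rfl⟩ := exists_bivector_eq_of_mem_range_ι_sq b hω2
  exact exists_eq_ι_mul_ι_of_bivector_mul_self_eq_zero b.linearIndependent A hsq

/-- In the exterior algebra of a 4-dimensional complex vector space, a
nonzero element `ω` of the degree-2 component is decomposable (`ω = u ∧ v`) if and only if
`ω ∧ ω = 0`. -/
theorem decomposable_iff_wedge_square_zero
    {V : Type*} [AddCommGroup V] [Module ℂ V] (hV : Module.finrank ℂ V = 4)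
    (ω : ExteriorAlgebra ℂ V)
    (hω2 : ω ∈ (LinearMap.range (ExteriorAlgebra.ι ℂ : V →ₗ[ℂ] ExteriorAlgebra ℂ V)) ^ 2)
    (hω : ω ≠ 0) :
    (∃ u v : V, ω = ExteriorAlgebra.ι ℂ u * ExteriorAlgebra.ι ℂ v) ↔ ω * ω = 0 :=
  decomposable_iff_wedge_square_zero_general hV ω hω2
end

section
/- Let R be a commutative ring, p ≥ 1 an integer, and let ζ₀, ζ₁, c, c̄ ∈ R and m : {0,1,…,p} → R satisfy relations (i) c^s · c̄^{p−1−s} = ζ₀·m(s+1) + ζ₁·m(s) for all 0 ≤ s ≤ p−1 and (ii) c̄·m(s+1) = c·m(s) for all 0 ≤ s ≤ p−1. Then for every 0 ≤ s ≤ p one has c^s · c̄^{p−s} = (ζ₀·c + ζ₁·c̄)·m(s). (This is identity (2.8) of the paper, the key algebraic consequence of relations (i) and (ii) in the presentation of the equivariant cohomology of the antisymmetric quadric.) -/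
/-- Identity (2.8) of the paper: if
(i) `c^s c̄^(p-1-s) = ζ₀ m(s+1) + ζ₁ m(s)` for `0 ≤ s ≤ p-1` and
(ii) `c̄ m(s+1) = c m(s)` for `0 ≤ s ≤ p-1`, then
`c^s c̄^(p-s) = (ζ₀ c + ζ₁ c̄) m(s)` for every `0 ≤ s ≤ p`. -/
theorem quadric_key_identity {R : Type*} [CommRing R]
    (p : ℕ) (hp : 1 ≤ p) (ζ₀ ζ₁ c c' : R) (m : ℕ → R)
    (h1 : ∀ s : ℕ, s < p → c ^ s * c' ^ (p - 1 - s) = ζ₀ * m (s + 1) + ζ₁ * m s)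
    (h2 : ∀ s : ℕ, s < p → c' * m (s + 1) = c * m s) :
    ∀ s : ℕ, s ≤ p → c ^ s * c' ^ (p - s) = (ζ₀ * c + ζ₁ * c') * m s := by
  intro s hs
  rcases lt_or_eq_of_le hs with h | h
  · have hps : p - s = (p - 1 - s) + 1 := by omega
    calc c ^ s * c' ^ (p - s) = c' * (c ^ s * c' ^ (p - 1 - s)) := by rw [hps]; ring
    _ = c' * (ζ₀ * m (s + 1) + ζ₁ * m s) := by rw [h1 s h]
    _ = ζ₀ * (c' * m (s + 1)) + ζ₁ * c' * m s := by ring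
    _ = ζ₀ * (c * m s) + ζ₁ * c' * m s := by rw [h2 s h]
    _ = (ζ₀ * c + ζ₁ * c') * m s := by ring
  · subst h
    rename' s => p
    have hlt : p - 1 < p := by omega
    have e1 := h1 (p - 1) hlt
    have e2 := h2 (p - 1) hlt
    have hp1 : p - 1 + 1 = p := by omega
    rw [hp1] at e1 e2
    have hpp : p = (p - 1) + 1 := by omega
    calc c ^ p * c' ^ (p - p) = c * (c ^ (p - 1) * c' ^ (p - 1 - (p - 1))) := by
          rw [Nat.sub_self, Nat.sub_self, pow_zero, mul_one, mul_one,
            ← pow_succ', hp1]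
    _ = c * (ζ₀ * m p + ζ₁ * m (p - 1)) := by rw [e1]
    _ = ζ₀ * c * m p + ζ₁ * (c * m (p - 1)) := by ring
    _ = ζ₀ * c * m p + ζ₁ * (c' * m p) := by rw [e2]
    _ = (ζ₀ * c + ζ₁ * c') * m p := by ring
end

section
/- Let R be a commutative ring, p ≥ 1 an integer, and let ζ₀, ζ₁, c, c̄ ∈ R and m : {0,1,…,p} → R satisfy relations (i) c^s · c̄^{p−1−s} = ζ₀·m(s+1) + ζ₁·m(s) for 0 ≤ s ≤ p−1, (ii) c̄·m(s+1) = c·m(s) for 0 ≤ s ≤ p−1, and (iii) m(s)·m(p−s) = 0 for 0 ≤ s ≤ p. Then c^s · c̄^{p−s} · m(p−s) = 0 for every 0 ≤ s ≤ p. (This is the vanishing c_{ω∨}^s c_{χω∨}^{p−s} m_{p−s} = 0 derived in the proof of Theorem 2.5, reflecting the excess intersection identity with the Euler class of χO(2).) -/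
/-- Under relations (i) `c^s c̄^(p-1-s) = ζ₀ m(s+1) + ζ₁ m(s)`,
(ii) `c̄ m(s+1) = c m(s)` (for `0 ≤ s ≤ p-1`), and (iii) `m(s) m(p-s) = 0` (for
`0 ≤ s ≤ p`), one has `c^s c̄^(p-s) m(p-s) = 0` for every `0 ≤ s ≤ p`. -/
theorem quadric_vanishing_identity {R : Type*} [CommRing R]
    (p : ℕ) (hp : 1 ≤ p) (ζ₀ ζ₁ c c' : R) (m : ℕ → R)
    (h1 : ∀ s : ℕ, s < p → c ^ s * c' ^ (p - 1 - s) = ζ₀ * m (s + 1) + ζ₁ * m s)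
    (h2 : ∀ s : ℕ, s < p → c' * m (s + 1) = c * m s)
    (h3 : ∀ s : ℕ, s ≤ p → m s * m (p - s) = 0) :
    ∀ s : ℕ, s ≤ p → c ^ s * c' ^ (p - s) * m (p - s) = 0 := by
  have h0 : m 0 * m p = 0 := by simpa using h3 0 (Nat.zero_le p)
  have hc1 : c' * m 1 = c * m 0 := h2 0 hp
  have hi0 : c' ^ (p - 1) = ζ₀ * m 1 + ζ₁ * m 0 := by simpa using h1 0 hp
  have key : ∀ k, k ≤ p → c' ^ k * m k = c ^ k * m 0 := by
    intro k
    induction k with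
    | zero => intro _; simp
    | succ n ih =>
      intro h
      calc c' ^ (n + 1) * m (n + 1) = c' ^ n * (c' * m (n + 1)) := by ring
        _ = c' ^ n * (c * m n) := by rw [h2 n (by omega)]
        _ = c * (c' ^ n * m n) := by ring
        _ = c * (c ^ n * m 0) := by rw [ih (by omega)]
        _ = c ^ (n + 1) * m 0 := by ring
  have hX : c' ^ p * m p = 0 := by
    have hpow : c' ^ p = c' ^ (p - 1) * c' := by
      rw [← pow_succ]; congr 1; omega
    calc c' ^ p * m p = (ζ₀ * m 1 + ζ₁ * m 0) * c' * m p := by rw [hpow, hi0]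
      _ = ζ₀ * ((c' * m 1) * m p) + ζ₁ * (c' * (m 0 * m p)) := by ring
      _ = ζ₀ * (c * (m 0 * m p)) + ζ₁ * (c' * (m 0 * m p)) := by rw [hc1]; ring
      _ = 0 := by rw [h0]; ring
  intro s hs
  calc c ^ s * c' ^ (p - s) * m (p - s)
      = c ^ s * (c' ^ (p - s) * m (p - s)) := by ring
    _ = c ^ s * (c ^ (p - s) * m 0) := by rw [key (p - s) (by omega)]
    _ = c ^ p * m 0 := by rw [← mul_assoc, ← pow_add]; congr 2; omega
    _ = c' ^ p * m p := (key p le_rfl).symm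
    _ = 0 := hX
end
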